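/- For every ν > 0 and λ ∈ ℝ, the cumulative distribution function at 0 of the skew-t distribution coincides with that of the skew-normal distribution: ∫_{−∞}^0 2 t_ν(x) T_{ν+1}(λ x √((ν+1)/(ν + x²))) dx = 1/2 − arctan(λ)/π. In particular, the perturbation measure of the skew-t distribution equals arctan(λ)/π, the same as for the skew-normal distribution. -/

import Mathlib

open MeasureTheory Real

/-- The Student t density with ν degrees of freedom. -/
noncomputable def studentTPdf (ν : ℝ) (x : ℝ) : ℝ :=
  Real.Gamma ((ν + 1) / 2) / (Real.sqrt (ν * Real.pi) * Real.Gamma (ν / 2)) *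
    (1 + x ^ 2 / ν) ^ (-(ν + 1) / 2)

/-- The Student t cumulative distribution function with ν degrees of freedom. -/
noncomputable def studentTCdf (ν : ℝ) (x : ℝ) : ℝ := ∫ u in Set.Iic x, studentTPdf ν u

/-!
Write `F λ` for the integral. Differentiating under the integral sign, the `λ`-derivative of
`T_{ν+1}(λ x w(x))`, `w(x) = √((ν+1)/(ν+x²))`, combines with `t_ν(x)` into the elementary
`ν^{ν/2+1}/π · x (ν + (1+λ²) x²)^{-(ν/2+1)}`, whose integral over `(-∞, 0]` is `-1/(π(1+λ²))`.
So `F + arctan/π` is constant; as `λ → ∞` the integrand tends to `0` at every `x < 0`, hence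
`F(∞) = 0` and the constant is `1/2`. The normalisation `∫ t_ν = 1` is never needed.
-/

open Set Filter Topology

theorem hasDerivAt_integral_Iic {E : Type*} [NormedAddCommGroup E] [NormedSpace ℝ E]
    [CompleteSpace E] {f : ℝ → E} (hf : Integrable f) {y : ℝ} (hy : ContinuousAt f y) :
    HasDerivAt (fun x => ∫ u in Iic x, f u) (f y) y := by
  have hsplit : (fun x => ∫ u in Iic x, f u)
      = fun x => (∫ u in Iic 0, f u) + ∫ u in (0 : ℝ)..x, f u := by
    ext x
    rw [← intervalIntegral.integral_Iic_sub_Iic hf.integrableOn hf.integrableOn, add_sub_cancel]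
  rw [hsplit]
  exact (intervalIntegral.integral_hasDerivAt_right hf.intervalIntegrable
    hf.aestronglyMeasurable.stronglyMeasurableAtFilter hy).const_add _

theorem integrableOn_Iic_deriv_of_nonpos' {g g' : ℝ → ℝ} {a l : ℝ}
    (hderiv : ∀ x ∈ Iic a, HasDerivAt g (g' x) x) (g'neg : ∀ x ∈ Iio a, g' x ≤ 0)
    (hg : Tendsto g atBot (𝓝 l)) : IntegrableOn g' (Iic a) := by
  have hrefl : IntegrableOn (fun y => -g' (-y)) (Ioi (-a)) := by
    refine integrableOn_Ioi_deriv_of_nonneg' (g := fun y => g (-y)) (fun y hy => ?_)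
      (fun y hy => neg_nonneg.2 (g'neg (-y) (neg_lt.1 (mem_Ioi.1 hy))))
      (hg.comp tendsto_neg_atTop_atBot)
    exact ((hderiv (-y) (neg_le.1 (mem_Ici.1 hy))).comp y (hasDerivAt_neg y)).congr_deriv
      (by ring)
  rw [integrableOn_Iic_iff_integrableOn_Iio]
  simpa [Function.comp_def] using ((Measure.measurePreserving_neg volume).integrableOn_comp_preimage
    (Homeomorph.neg ℝ).measurableEmbedding).2 hrefl.neg

section Kernel

variable {a b s : ℝ}

theorem hasDerivAt_rpow_add_mul_sq (ha : 0 < a) (hb : 0 < b) (hs : s ≠ 0) (x : ℝ) :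
    HasDerivAt (fun x => (a + b * x ^ 2) ^ (-s) / (-2 * b * s))
      (x * (a + b * x ^ 2) ^ (-(s + 1))) x := by
  have hpos : 0 < a + b * x ^ 2 := by positivity
  have hinner : HasDerivAt (fun x => a + b * x ^ 2) (b * (2 * x ^ 1)) x :=
    ((hasDerivAt_pow 2 x).const_mul b).const_add a
  refine ((hinner.rpow_const (p := -s) (Or.inl hpos.ne')).div_const _).congr_deriv ?_
  rw [show -s - 1 = -(s + 1) by ring]
  field_simp

theorem tendsto_rpow_add_mul_sq_atBot (hb : 0 < b) (hs : 0 < s) :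
    Tendsto (fun x => (a + b * x ^ 2) ^ (-s) / (-2 * b * s)) atBot (𝓝 0) := by
  have hbase : Tendsto (fun x : ℝ => a + b * x ^ 2) atBot atTop :=
    tendsto_atTop_add_const_left _ _
      ((tendsto_pow_atTop two_ne_zero).comp tendsto_neg_atBot_atTop |>.const_mul_atTop hb |>.congr
        fun x => by simp)
  simpa using ((tendsto_rpow_neg_atTop hs).comp hbase).div_const (-2 * b * s)

theorem integrableOn_Iic_mul_rpow_add_mul_sq (ha : 0 < a) (hb : 0 < b) (hs : 0 < s) :
    IntegrableOn (fun x => x * (a + b * x ^ 2) ^ (-(s + 1))) (Iic 0) :=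
  integrableOn_Iic_deriv_of_nonpos' (fun x _ => hasDerivAt_rpow_add_mul_sq ha hb hs.ne' x)
    (fun x hx => mul_nonpos_of_nonpos_of_nonneg (le_of_lt hx) (by positivity))
    (tendsto_rpow_add_mul_sq_atBot hb hs)

theorem integral_Iic_mul_rpow_add_mul_sq (ha : 0 < a) (hb : 0 < b) (hs : 0 < s) :
    ∫ x in Iic (0 : ℝ), x * (a + b * x ^ 2) ^ (-(s + 1)) = -(a ^ (-s) / (2 * b * s)) := by
  rw [integral_Iic_of_hasDerivAt_of_tendsto'
    (fun x _ => hasDerivAt_rpow_add_mul_sq ha hb hs.ne' x)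
    (integrableOn_Iic_mul_rpow_add_mul_sq ha hb hs) (tendsto_rpow_add_mul_sq_atBot hb hs)]
  field_simp
  ring_nf

theorem norm_mul_rpow_add_mul_sq_le {b' p x : ℝ} (ha : 0 < a) (hb : 0 ≤ b) (hbb' : b ≤ b')
    (hp : 0 ≤ p) (hx : x ≤ 0) :
    ‖x * (a + b' * x ^ 2) ^ (-p)‖ ≤ -(x * (a + b * x ^ 2) ^ (-p)) := by
  have hb' : 0 ≤ b' := hb.trans hbb'
  rw [norm_mul, Real.norm_of_nonpos hx, Real.norm_of_nonneg (by positivity), ← neg_mul]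
  gcongr ?_ * ?_
  · exact neg_nonneg.2 hx
  · exact Real.rpow_le_rpow_of_nonpos (by positivity) (by gcongr) (neg_nonpos.2 hp)

end Kernel

section StudentT

variable {ν : ℝ}

noncomputable def studentTConst (ν : ℝ) : ℝ :=
  Real.Gamma ((ν + 1) / 2) / (Real.sqrt (ν * Real.pi) * Real.Gamma (ν / 2))

theorem studentTPdf_eq (ν x : ℝ) :
    studentTPdf ν x = studentTConst ν * (1 + x ^ 2 / ν) ^ (-(ν + 1) / 2) := rfl

theorem studentTConst_pos (hν : 0 < ν) : 0 < studentTConst ν := by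
  have := Real.Gamma_pos_of_pos (by positivity : 0 < (ν + 1) / 2)
  have := Real.Gamma_pos_of_pos (by positivity : 0 < ν / 2)
  unfold studentTConst
  positivity

theorem two_mul_studentTConst_mul_studentTConst_add_one (hν : 0 < ν) :
    2 * studentTConst ν * studentTConst (ν + 1) * √(ν + 1) = √ν / π := by
  have hsucc : Real.Gamma ((ν + 1 + 1) / 2) = ν / 2 * Real.Gamma (ν / 2) := by
    rw [show (ν + 1 + 1) / 2 = ν / 2 + 1 by ring, Real.Gamma_add_one (by positivity)]
  rw [studentTConst, studentTConst, hsucc, Real.sqrt_mul hν.le, Real.sqrt_mul (by positivity)]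
  field_simp
  rw [Real.sq_sqrt pi_pos.le, Real.sq_sqrt hν.le]

theorem studentTPdf_pos (hν : 0 < ν) (x : ℝ) : 0 < studentTPdf ν x := by
  have := studentTConst_pos hν
  rw [studentTPdf_eq]
  positivity

theorem continuous_studentTPdf (hν : 0 < ν) : Continuous (studentTPdf ν) :=
  continuous_const.mul <| (by fun_prop : Continuous fun x : ℝ => 1 + x ^ 2 / ν).rpow_const
    fun x => Or.inl (by positivity)

theorem integrable_studentTPdf (hν : 0 < ν) : Integrable (studentTPdf ν) := by
  have hdim : (Module.finrank ℝ ℝ : ℝ) < ν + 1 := by simpa using hν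
  have := ((integrable_rpow_neg_one_add_norm_sq hdim).comp_div
    (Real.sqrt_pos.2 hν).ne').const_mul (studentTConst ν)
  refine this.congr (Eventually.of_forall fun x => ?_)
  simp only [studentTPdf_eq, norm_div, Real.norm_eq_abs, div_pow, sq_abs, Real.sq_sqrt hν.le]

theorem hasDerivAt_studentTCdf (hν : 0 < ν) (x : ℝ) :
    HasDerivAt (studentTCdf ν) (studentTPdf ν x) x :=
  hasDerivAt_integral_Iic (integrable_studentTPdf hν) (continuous_studentTPdf hν).continuousAt

theorem continuous_studentTCdf (hν : 0 < ν) : Continuous (studentTCdf ν) :=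
  continuous_iff_continuousAt.2 fun x => (hasDerivAt_studentTCdf hν x).continuousAt

theorem studentTCdf_nonneg (hν : 0 < ν) (x : ℝ) : 0 ≤ studentTCdf ν x :=
  setIntegral_nonneg measurableSet_Iic fun u _ => (studentTPdf_pos hν u).le

theorem studentTCdf_le_integral (hν : 0 < ν) (x : ℝ) :
    studentTCdf ν x ≤ ∫ u, studentTPdf ν u :=
  setIntegral_le_integral (integrable_studentTPdf hν)
    (Eventually.of_forall fun u => (studentTPdf_pos hν u).le)

theorem tendsto_studentTCdf_atBot : Tendsto (studentTCdf ν) atBot (𝓝 0) :=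
  tendsto_integral_Iic_zero tendsto_id

end StudentT

section SkewT

variable {ν : ℝ}

theorem two_mul_studentTPdf_mul_studentTPdf_add_one (hν : 0 < ν) (l x : ℝ) :
    2 * studentTPdf ν x * (studentTPdf (ν + 1) (l * x * √((ν + 1) / (ν + x ^ 2))) *
      (x * √((ν + 1) / (ν + x ^ 2))))
      = ν ^ (ν / 2 + 1) / π * (x * (ν + (1 + l ^ 2) * x ^ 2) ^ (-(ν / 2 + 1))) := by
  set B := ν + x ^ 2 with hB
  set A := ν + (1 + l ^ 2) * x ^ 2
  have hBpos : 0 < B := by positivity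
  have hApos : 0 < A := by positivity
  have hw : √((ν + 1) / B) = √(ν + 1) * B ^ (-(1 / 2) : ℝ) := by
    rw [Real.sqrt_div' _ hBpos.le, Real.sqrt_eq_rpow B, div_eq_mul_inv, ← Real.rpow_neg hBpos.le]
  have hpdf : studentTPdf ν x = studentTConst ν * (ν ^ ((ν + 1) / 2) * B ^ (-(ν + 1) / 2)) := by
    rw [studentTPdf_eq, show 1 + x ^ 2 / ν = B / ν by rw [hB]; field_simp,
      Real.div_rpow hBpos.le hν.le, neg_div, Real.rpow_neg hν.le, div_inv_eq_mul]
    ring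
  have hpdf' : studentTPdf (ν + 1) (l * x * √((ν + 1) / B))
      = studentTConst (ν + 1) * (A ^ (-(ν / 2 + 1)) * B ^ (ν / 2 + 1)) := by
    have harg : 1 + (l * x * √((ν + 1) / B)) ^ 2 / (ν + 1) = A / B := by
      rw [mul_pow, Real.sq_sqrt (by positivity)]
      field_simp
      ring
    rw [studentTPdf_eq, harg, show -(ν + 1 + 1) / 2 = -(ν / 2 + 1) by ring,
      Real.div_rpow hApos.le hBpos.le, Real.rpow_neg hBpos.le, div_inv_eq_mul]
  have hBpow : B ^ (-(ν + 1) / 2) * B ^ (ν / 2 + 1) * B ^ (-(1 / 2) : ℝ) = 1 := by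
    rw [← Real.rpow_add hBpos, ← Real.rpow_add hBpos,
      show -(ν + 1) / 2 + (ν / 2 + 1) + -(1 / 2) = (0 : ℝ) by ring, Real.rpow_zero]
  have hνpow : √ν * ν ^ ((ν + 1) / 2) = ν ^ (ν / 2 + 1) := by
    rw [Real.sqrt_eq_rpow, ← Real.rpow_add hν]
    ring_nf
  rw [hpdf, hpdf', hw]
  linear_combination (ν ^ ((ν + 1) / 2) * x * A ^ (-(ν / 2 + 1)) *
      (B ^ (-(ν + 1) / 2) * B ^ (ν / 2 + 1) * B ^ (-(1 / 2) : ℝ))) *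
      two_mul_studentTConst_mul_studentTConst_add_one hν +
    (√ν / π * ν ^ ((ν + 1) / 2) * x * A ^ (-(ν / 2 + 1))) * hBpow +
    (x * A ^ (-(ν / 2 + 1)) / π) * hνpow

noncomputable def skewTPdf (ν l x : ℝ) : ℝ :=
  2 * studentTPdf ν x * studentTCdf (ν + 1) (l * x * √((ν + 1) / (ν + x ^ 2)))

theorem continuous_skewTPdf (hν : 0 < ν) (l : ℝ) : Continuous (skewTPdf ν l) :=
  (continuous_const.mul (continuous_studentTPdf hν)).mul <|
    (continuous_studentTCdf (by linarith)).comp <|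
      by fun_prop (disch := exact fun x => by positivity)

theorem norm_skewTPdf_le (hν : 0 < ν) (l x : ℝ) :
    ‖skewTPdf ν l x‖ ≤ 2 * (∫ u, studentTPdf (ν + 1) u) * studentTPdf ν x := by
  have hpdf := studentTPdf_pos hν x
  have hcdf := studentTCdf_nonneg (by linarith : 0 < ν + 1) (l * x * √((ν + 1) / (ν + x ^ 2)))
  have hle := studentTCdf_le_integral (by linarith : 0 < ν + 1) (l * x * √((ν + 1) / (ν + x ^ 2)))
  rw [skewTPdf, Real.norm_of_nonneg (by positivity)]
  nlinarith

theorem integrable_skewTPdf (hν : 0 < ν) (l : ℝ) : Integrable (skewTPdf ν l) :=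
  ((integrable_studentTPdf hν).const_mul _).mono' (continuous_skewTPdf hν l).aestronglyMeasurable
    (Eventually.of_forall (norm_skewTPdf_le hν l))

theorem hasDerivAt_skewTPdf_skewness (hν : 0 < ν) (l x : ℝ) :
    HasDerivAt (fun l => skewTPdf ν l x)
      (ν ^ (ν / 2 + 1) / π * (x * (ν + (1 + l ^ 2) * x ^ 2) ^ (-(ν / 2 + 1)))) l := by
  have hlin : HasDerivAt (fun l => l * (x * √((ν + 1) / (ν + x ^ 2))))
      (x * √((ν + 1) / (ν + x ^ 2))) l := hasDerivAt_mul_const _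
  have := ((hasDerivAt_studentTCdf (ν := ν + 1) (by linarith) _).comp l hlin).const_mul
    (2 * studentTPdf ν x)
  rw [← two_mul_studentTPdf_mul_studentTPdf_add_one hν]
  simpa only [skewTPdf, Function.comp_def, mul_assoc] using this

theorem tendsto_skewTPdf_atTop (hν : 0 < ν) {x : ℝ} (hx : x < 0) :
    Tendsto (fun l => skewTPdf ν l x) atTop (𝓝 0) := by
  have hslope : x * √((ν + 1) / (ν + x ^ 2)) < 0 :=
    mul_neg_of_neg_of_pos hx (Real.sqrt_pos.2 (by positivity))
  have := ((tendsto_studentTCdf_atBot (ν := ν + 1)).comp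
    (tendsto_id.atTop_mul_const_of_neg hslope)).const_mul (2 * studentTPdf ν x)
  simpa [skewTPdf, mul_assoc] using this

theorem hasDerivAt_integral_skewTPdf (hν : 0 < ν) (l₀ : ℝ) :
    HasDerivAt (fun l => ∫ x in Iic 0, skewTPdf ν l x) (-(π * (1 + l₀ ^ 2))⁻¹) l₀ := by
  set K := ν ^ (ν / 2 + 1) / π
  have hK : 0 < K := by positivity
  have hbound : ∀ᵐ x ∂volume.restrict (Iic 0), ∀ l ∈ univ,
      ‖K * (x * (ν + (1 + l ^ 2) * x ^ 2) ^ (-(ν / 2 + 1)))‖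
        ≤ K * -(x * (ν + 1 * x ^ 2) ^ (-(ν / 2 + 1))) := by
    rw [ae_restrict_iff' measurableSet_Iic]
    refine Eventually.of_forall fun x hx l _ => ?_
    rw [norm_mul, Real.norm_of_nonneg hK.le]
    gcongr
    exact norm_mul_rpow_add_mul_sq_le hν zero_le_one (by nlinarith) (by positivity) hx
  obtain ⟨-, h⟩ := hasDerivAt_integral_of_dominated_loc_of_deriv_le (μ := volume.restrict (Iic 0))
    (F' := fun l x => K * (x * (ν + (1 + l ^ 2) * x ^ 2) ^ (-(ν / 2 + 1))))
    (bound := fun x => K * -(x * (ν + 1 * x ^ 2) ^ (-(ν / 2 + 1)))) univ_mem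
    (Eventually.of_forall fun l => (continuous_skewTPdf hν l).aestronglyMeasurable)
    (integrable_skewTPdf hν l₀).integrableOn
    (continuous_const.mul (continuous_id.mul
      ((by fun_prop : Continuous fun x : ℝ => ν + (1 + l₀ ^ 2) * x ^ 2).rpow_const
        fun x => Or.inl (by positivity)))).aestronglyMeasurable
    hbound (((integrableOn_Iic_mul_rpow_add_mul_sq hν one_pos (by positivity)).neg).const_mul K)
    (Eventually.of_forall fun x l _ => hasDerivAt_skewTPdf_skewness hν l x)
  refine h.congr_deriv ?_
  have hpow : ν ^ (ν / 2 + 1) * ν ^ (-(ν / 2)) = ν := by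
    rw [← Real.rpow_add hν, show ν / 2 + 1 + -(ν / 2) = 1 by ring, Real.rpow_one]
  rw [integral_const_mul, integral_Iic_mul_rpow_add_mul_sq hν (by positivity) (by positivity)]
  rw [mul_neg, div_mul_div_comm, hpow]
  field_simp

theorem tendsto_integral_skewTPdf_atTop (hν : 0 < ν) :
    Tendsto (fun l => ∫ x in Iic 0, skewTPdf ν l x) atTop (𝓝 0) := by
  have hlim : ∀ᵐ x ∂volume.restrict (Iic (0 : ℝ)),
      Tendsto (fun l => skewTPdf ν l x) atTop (𝓝 0) := by
    -- at `x = 0` the integrand does not depend on `l`; that point is null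
    rw [← Measure.restrict_congr_set Iio_ae_eq_Iic, ae_restrict_iff' measurableSet_Iio]
    exact Eventually.of_forall fun x hx => tendsto_skewTPdf_atTop hν hx
  simpa using tendsto_integral_filter_of_dominated_convergence _
    (Eventually.of_forall fun l => (continuous_skewTPdf hν l).aestronglyMeasurable)
    (Eventually.of_forall fun l => Eventually.of_forall (norm_skewTPdf_le hν l))
    ((integrable_studentTPdf hν).const_mul _).integrableOn hlim

end SkewT

theorem eq_one_half_sub_arctan_div_pi_of_hasDerivAt {F : ℝ → ℝ}
    (hF : ∀ l, HasDerivAt F (-(π * (1 + l ^ 2))⁻¹) l) (hlim : Tendsto F atTop (𝓝 0)) (l : ℝ) :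
    F l = 1 / 2 - arctan l / π := by
  set G := fun t => F t + arctan t / π
  have hG : ∀ t, HasDerivAt G 0 t := fun t => by
    refine ((hF t).add ((hasDerivAt_arctan t).div_const π)).congr_deriv ?_
    field_simp
    ring
  have hGconst : ∀ t, G t = G l := fun t =>
    is_const_of_deriv_eq_zero (fun t => (hG t).differentiableAt) (fun t => (hG t).deriv) t l
  have hGlim : Tendsto G atTop (𝓝 (0 + π / 2 / π)) :=
    hlim.add ((tendsto_nhds_of_tendsto_nhdsWithin tendsto_arctan_atTop).div_const π)
  have hGl : G l = 0 + π / 2 / π :=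
    tendsto_nhds_unique (tendsto_const_nhds.congr fun t => (hGconst t).symm) hGlim
  have hhalf : π / 2 / π = 1 / 2 := by field_simp
  simp only [G, hhalf] at hGl
  linarith

/-- For every ν > 0 and λ ∈ ℝ, the cdf at 0 of the skew-t
distribution coincides with that of the skew-normal distribution:
S(0;λ) = 1/2 − arctan(λ)/π, so the perturbation measure of the skew-t equals
arctan(λ)/π, as for the skew-normal distribution. -/
theorem skew_t_cdf_at_zero (ν : ℝ) (hν : 0 < ν) (l : ℝ) :
    ∫ x in Set.Iic (0 : ℝ),
        2 * studentTPdf ν x * studentTCdf (ν + 1) (l * x * Real.sqrt ((ν + 1) / (ν + x ^ 2)))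
      = 1 / 2 - Real.arctan l / Real.pi :=
  eq_one_half_sub_arctan_div_pi_of_hasDerivAt (hasDerivAt_integral_skewTPdf hν)
    (tendsto_integral_skewTPdf_atTop hν) l
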